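/- arXiv:2403.11166 — 3 statements merged into one kernel-verified Lean document; each statement's English description precedes it below -/
import Mathlib

section
/- Let R be a commutative ring, M, N, P modules over R, and B : M →ₗ[R] N →ₗ[R] P an R-bilinear map. Fix m and let u ∈ M, v ∈ N, u'_i ∈ M and v'_j ∈ N and s_{ij} ∈ P for i, j < m, and scalars k_i, ℓ_j ∈ R for i, j < m. Define ũ = u − Σ_{i<m} k_i • u'_i and ṽ = v − Σ_{j<m} ℓ_j • v'_j, and for each j < m define A_j = Σ_{i<m} k_i • s_{ij} and B_j = B ũ v'_j + Σ_{i<m} k_i • (B u'_i v'_j − s_{ij}). Then (B u ṽ + Σ_{j<m} ℓ_j • A_j) + (Σ_{j<m} ℓ_j • B_j) = B u v. -/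
/-- End-to-end correctness of the preprocessing protocol P(∘, u, v)
(Algorithm 3): the two parties' final outputs are additive shares of `B u v`. -/
theorem stmt_8 {R M N P : Type*} [CommRing R]
    [AddCommGroup M] [AddCommGroup N] [AddCommGroup P]
    [Module R M] [Module R N] [Module R P]
    (B : M →ₗ[R] N →ₗ[R] P) {m : ℕ} (u : M) (v : N)
    (u' : Fin m → M) (v' : Fin m → N) (s : Fin m → Fin m → P)
    (k : Fin m → R) (l : Fin m → R) :
    (B u (v - ∑ j : Fin m, l j • v' j) +
        ∑ j : Fin m, l j • (∑ i : Fin m, k i • s i j)) +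
      (∑ j : Fin m, l j •
        (B (u - ∑ i : Fin m, k i • u' i) (v' j) +
          ∑ i : Fin m, k i • (B (u' i) (v' j) - s i j)))
    = B u v := by
  simp only [map_sub, map_sum, map_smul, LinearMap.sub_apply, LinearMap.sum_apply,
    LinearMap.smul_apply, smul_sub, smul_add, Finset.smul_sum, Finset.sum_add_distrib,
    Finset.sum_sub_distrib]
  abel
end

section
/- Let R be a commutative ring and n_i, n_o, B positive natural numbers. Given coefficients v_{j,k} ∈ R for j < n_i, k < B and W_{i,j} ∈ R for i < n_o, j < n_i, define the polynomials v(X) = Σ_{j<n_i} Σ_{k<B} v_{j,k} · X^{k·n_o·n_i + j} and W(X) = Σ_{i<n_o} Σ_{j<n_i} W_{i,j} · X^{i·n_i + (n_i − 1 − j)} in R[X]. Then for every i < n_o and k < B, the coefficient of X^{k·n_o·n_i + i·n_i + n_i − 1} in the product W(X)·v(X) equals Σ_{j<n_i} W_{i,j} · v_{j,k}. -/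
open Polynomial

lemma key_arith (n_i n_o B : ℕ) (hni : 0 < n_i)
    (i i' : ℕ) (hi : i < n_o) (hi' : i' < n_o)
    (j j' : ℕ) (hj : j < n_i) (hj' : j' < n_i)
    (k k' : ℕ) (hk : k < B) (hk' : k' < B) :
    (i' * n_i + (n_i - 1 - j) + (k' * n_o * n_i + j')
      = k * n_o * n_i + i * n_i + (n_i - 1)) ↔ (i' = i ∧ j' = j ∧ k' = k) := by
  have hN : ∀ a b : ℕ, a < b → a * (n_o * n_i) + n_o * n_i ≤ b * (n_o * n_i) := by
    intro a b hab
    have := Nat.mul_le_mul_right (n_o * n_i) (Nat.succ_le_of_lt hab)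
    simpa [Nat.succ_mul] using this
  have hI : ∀ a b : ℕ, a < b → a * n_i + n_i ≤ b * n_i := by
    intro a b hab
    have := Nat.mul_le_mul_right n_i (Nat.succ_le_of_lt hab)
    simpa [Nat.succ_mul] using this
  have hi'N : i' * n_i + n_i ≤ n_o * n_i := by
    have := Nat.mul_le_mul_right n_i (Nat.succ_le_of_lt hi')
    simpa [Nat.succ_mul] using this
  have hiN : i * n_i + n_i ≤ n_o * n_i := by
    have := Nat.mul_le_mul_right n_i (Nat.succ_le_of_lt hi)
    simpa [Nat.succ_mul] using this
  rw [Nat.mul_assoc k', Nat.mul_assoc k]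
  constructor
  · intro h
    have hkk : k' = k := by
      rcases lt_trichotomy k' k with h1 | h1 | h1
      · have := hN k' k h1
        generalize k' * (n_o * n_i) = p at *
        generalize k * (n_o * n_i) = q at *
        generalize i' * n_i = a at *
        generalize i * n_i = b at *
        omega
      · exact h1
      · have := hN k k' h1
        generalize k' * (n_o * n_i) = p at *
        generalize k * (n_o * n_i) = q at *
        generalize i' * n_i = a at *
        generalize i * n_i = b at *
        omega
    subst hkk
    have hii : i' = i := by
      rcases lt_trichotomy i' i with h1 | h1 | h1
      · have := hI i' i h1
        generalize k' * (n_o * n_i) = p at *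
        generalize i' * n_i = a at *
        generalize i * n_i = b at *
        omega
      · exact h1
      · have := hI i i' h1
        generalize k' * (n_o * n_i) = p at *
        generalize i' * n_i = a at *
        generalize i * n_i = b at *
        omega
    subst hii
    refine ⟨rfl, ?_, rfl⟩
    generalize k' * (n_o * n_i) = p at *
    generalize i' * n_i = a at *
    omega
  · rintro ⟨rfl, rfl, rfl⟩
    generalize k' * (n_o * n_i) = p at *
    generalize i' * n_i = a at *
    omega

/-- Correctness of the polynomial encoding for batched matrix multiplication
(Appendix A): the coefficient of `X^(k·n_o·n_i + i·n_i + n_i − 1)` in the product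
of the encodings equals `(W·v)_{i,k} = Σ_j W i j * v j k`. -/
theorem stmt_10 {R : Type*} [CommRing R] (n_i n_o B : ℕ)
    (hni : 0 < n_i) (hno : 0 < n_o) (hB : 0 < B)
    (v : Fin n_i → Fin B → R) (W : Fin n_o → Fin n_i → R) :
    ∀ (i : Fin n_o) (k : Fin B),
      ((∑ i' : Fin n_o, ∑ j : Fin n_i,
          Polynomial.monomial ((i' : ℕ) * n_i + (n_i - 1 - (j : ℕ))) (W i' j)) *
        (∑ j : Fin n_i, ∑ k' : Fin B,
          Polynomial.monomial ((k' : ℕ) * n_o * n_i + (j : ℕ)) (v j k'))).coeff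
        ((k : ℕ) * n_o * n_i + (i : ℕ) * n_i + (n_i - 1))
      = ∑ j : Fin n_i, W i j * v j k := by
  intro i k
  rw [Finset.sum_mul_sum]
  simp only [Finset.sum_mul, Finset.mul_sum, monomial_mul_monomial,
    Polynomial.finset_sum_coeff, Polynomial.coeff_monomial]
  have : ∀ (i' : Fin n_o) (j j' : Fin n_i) (k' : Fin B),
      ((i' : ℕ) * n_i + (n_i - 1 - (j : ℕ)) + ((k' : ℕ) * n_o * n_i + (j' : ℕ))
        = (k : ℕ) * n_o * n_i + (i : ℕ) * n_i + (n_i - 1))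
      ↔ (i' = i ∧ j' = j ∧ k' = k) := by
    intro i' j j' k'
    rw [key_arith n_i n_o B hni i i' i.2 i'.2 j j' j.2 j'.2 k k' k.2 k'.2]
    simp [Fin.ext_iff]
  simp only [this]
  simp [ite_and, Finset.sum_ite_eq, Finset.sum_ite_eq', Finset.sum_ite_irrel, Finset.sum_const_zero]
end

section
/- Let R be a commutative ring and B, c_o, c_i, h, w, s positive natural numbers with s ≤ h and s ≤ w. Given coefficients v_{b,c,i,j} ∈ R for b < B, c < c_i, i < h, j < w and W_{c',c,a,a'} ∈ R for c' < c_o, c < c_i, a < s, a' < s, set O = (c_i − 1)·h·w + (s − 1)·w + (s − 1) and define in R[X] the polynomials v(X) = Σ_{b,c,i,j} v_{b,c,i,j} · X^{b·c_o·c_i·h·w + c·h·w + i·w + j} and W(X) = Σ_{c',c,a,a'} W_{c',c,a,a'} · X^{O + c'·c_i·h·w − c·h·w − a·w − a'} (all exponents are nonnegative). Then for every b < B, c' < c_o, i ≤ h − s and j ≤ w − s, the coefficient of X^{b·c_o·c_i·h·w + O + c'·c_i·h·w + i·w + j} in W(X)·v(X) equals Σ_{c<c_i} Σ_{a<s} Σ_{a'<s}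 W_{c',c,a,a'} · v_{b,c,i+a,j+a'}. -/
open Polynomial

lemma digit_unique {K x y r r' : ℕ} (hr : r < K) (hr' : r' < K)
    (h : x * K + r = y * K + r') : x = y ∧ r = r' := by
  have hxy : x = y := by
    rcases Nat.lt_trichotomy x y with h1 | h1 | h1
    · have h2 : (x + 1) * K ≤ y * K := Nat.mul_le_mul_right _ h1
      rw [add_mul, one_mul] at h2
      linarith
    · exact h1
    · have h2 : (y + 1) * K ≤ x * K := Nat.mul_le_mul_right _ h1
      rw [add_mul, one_mul] at h2
      linarith
  subst hxy
  exact ⟨rfl, Nat.add_left_cancel h⟩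

lemma stepb {x q r n : ℕ} (hx : x < q) (hr : r < n) : x * n + r < q * n := by
  have h2 : (x + 1) * n ≤ q * n := Nat.mul_le_mul_right _ hx
  rw [add_mul, one_mul] at h2
  linarith

lemma conv_key (c_o c_i h w s : ℕ)
    (hh : 0 < h) (hw : 0 < w) (hs : 0 < s) (hsh : s ≤ h) (hsw : s ≤ w)
    (b b' c'' c' c c₂ a a' i j i' j' : ℕ)
    (hc'' : c'' < c_o) (hc' : c' < c_o) (hc : c < c_i) (hc₂ : c₂ < c_i)
    (ha : a < s) (ha' : a' < s) (hi' : i' < h) (hj' : j' < w)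
    (hi : i ≤ h - s) (hj : j ≤ w - s) :
    ((c_i - 1) * h * w + (s - 1) * w + (s - 1) + c'' * c_i * h * w
        - c * h * w - a * w - a')
      + (b' * c_o * c_i * h * w + c₂ * h * w + i' * w + j')
    = b * c_o * c_i * h * w + ((c_i - 1) * h * w + (s - 1) * w + (s - 1))
        + c' * c_i * h * w + i * w + j
    ↔ (c'' = c' ∧ b' = b ∧ c₂ = c ∧ i' = i + a ∧ j' = j + a') := by
  have hia : i + a < h := by omega
  have hja : j + a' < w := by omega
  obtain ⟨s1, hs1⟩ : ∃ t, s - 1 = t := ⟨_, rfl⟩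
  obtain ⟨ci1, hci1⟩ : ∃ t, c_i - 1 = t := ⟨_, rfl⟩
  rw [hs1, hci1]
  have hQle : c * h * w + (a * w + a') ≤
      ci1 * h * w + s1 * w + s1 + c'' * c_i * h * w := by
    have h1 : c * h * w ≤ ci1 * h * w := by
      have : c * h ≤ ci1 * h := Nat.mul_le_mul_right _ (by omega)
      exact Nat.mul_le_mul_right _ this
    have h2 : a * w ≤ s1 * w := Nat.mul_le_mul_right _ (by omega)
    have h3 : a' ≤ s1 := by omega
    linarith [Nat.zero_le (c'' * c_i * h * w)]
  rw [Nat.sub_sub, Nat.sub_sub]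
  have hcancel := Nat.sub_add_cancel hQle
  constructor
  · intro E
    have E2 : (ci1 * h * w + s1 * w + s1 + c'' * c_i * h * w)
        + (b' * c_o * c_i * h * w + c₂ * h * w + i' * w + j')
      = (b * c_o * c_i * h * w + (ci1 * h * w + s1 * w + s1)
        + c' * c_i * h * w + i * w + j) + (c * h * w + (a * w + a')) := by
      linarith
    obtain ⟨N, hN⟩ : ∃ N, N = h * w := ⟨_, rfl⟩
    obtain ⟨M, hM⟩ : ∃ M, M = c_i * N := ⟨_, rfl⟩
    obtain ⟨K, hK⟩ : ∃ K, K = c_o * M := ⟨_, rfl⟩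
    have e1 : b' * c_o * c_i * h * w = b' * K := by rw [hK, hM, hN]; ring
    have e2 : b * c_o * c_i * h * w = b * K := by rw [hK, hM, hN]; ring
    have e3 : c'' * c_i * h * w = c'' * M := by rw [hM, hN]; ring
    have e4 : c' * c_i * h * w = c' * M := by rw [hM, hN]; ring
    have e5 : c * h * w = c * N := by rw [hN]; ring
    have e6 : c₂ * h * w = c₂ * N := by rw [hN]; ring
    have e7 : (i + a) * w = i * w + a * w := by ring
    have E3 : b' * K + (c'' * M + (c₂ * N + (i' * w + j')))
        = b * K + (c' * M + (c * N + ((i + a) * w + (j + a')))) := by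
      rw [e7]; linarith
    have bw1 : i' * w + j' < N := by rw [hN]; exact stepb hi' hj'
    have bw2 : (i + a) * w + (j + a') < N := by rw [hN]; exact stepb hia hja
    have bN1 : c₂ * N + (i' * w + j') < M := by rw [hM]; exact stepb hc₂ bw1
    have bN2 : c * N + ((i + a) * w + (j + a')) < M := by rw [hM]; exact stepb hc bw2
    have bM1 : c'' * M + (c₂ * N + (i' * w + j')) < K := by rw [hK]; exact stepb hc'' bN1
    have bM2 : c' * M + (c * N + ((i + a) * w + (j + a'))) < K := by
      rw [hK]; exact stepb hc' bN2
    obtain ⟨hb, E4⟩ := digit_unique bM1 bM2 E3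
    obtain ⟨hcc, E5⟩ := digit_unique bN1 bN2 E4
    obtain ⟨hc2c, E6⟩ := digit_unique bw1 bw2 E5
    obtain ⟨hieq, hjeq⟩ := digit_unique hj' hja E6
    exact ⟨hcc, hb, hc2c, hieq, hjeq⟩
  · rintro ⟨rfl, rfl, rfl, rfl, rfl⟩
    have e7 : (i + a) * w = i * w + a * w := by ring
    linarith

/-- Correctness of the polynomial encoding for batched 2D convolution
(Appendix A): the coefficient of `X^(b·c_o·c_i·h·w + O + c'·c_i·h·w + i·w + j)`
in the product of the encodings equals the convolution output
`y_{b,c',i,j} = Σ_{c,a,a'} W_{c',c,a,a'} · v_{b,c,i+a,j+a'}`. -/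
theorem stmt_11 {R : Type*} [CommRing R] (B c_o c_i h w s : ℕ)
    (hB : 0 < B) (hco : 0 < c_o) (hci : 0 < c_i) (hh : 0 < h) (hw : 0 < w)
    (hs : 0 < s) (hsh : s ≤ h) (hsw : s ≤ w)
    (v : Fin B → Fin c_i → Fin h → Fin w → R)
    (W : Fin c_o → Fin c_i → Fin s → Fin s → R) :
    ∀ (b : Fin B) (c' : Fin c_o) (i j : ℕ) (hi : i ≤ h - s) (hj : j ≤ w - s),
      ((∑ c'' : Fin c_o, ∑ c : Fin c_i, ∑ a : Fin s, ∑ a' : Fin s,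
          Polynomial.monomial
            (((c_i - 1) * h * w + (s - 1) * w + (s - 1))
              + (c'' : ℕ) * c_i * h * w - (c : ℕ) * h * w - (a : ℕ) * w - (a' : ℕ))
            (W c'' c a a')) *
        (∑ b' : Fin B, ∑ c : Fin c_i, ∑ i' : Fin h, ∑ j' : Fin w,
          Polynomial.monomial
            ((b' : ℕ) * c_o * c_i * h * w + (c : ℕ) * h * w + (i' : ℕ) * w + (j' : ℕ))
            (v b' c i' j'))).coeff
        ((b : ℕ) * c_o * c_i * h * w
          + ((c_i - 1) * h * w + (s - 1) * w + (s - 1))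
          + (c' : ℕ) * c_i * h * w + i * w + j)
      = ∑ c : Fin c_i, ∑ a : Fin s, ∑ a' : Fin s,
          W c' c a a' *
            v b c ⟨i + (a : ℕ), by have := a.isLt; omega⟩
              ⟨j + (a' : ℕ), by have := a'.isLt; omega⟩ := by
  intro b c' i j hi hj
  have keyF : ∀ (c'' : Fin c_o) (c : Fin c_i) (a a' : Fin s) (b' : Fin B)
      (c₂ : Fin c_i) (i' : Fin h) (j' : Fin w),
      (((c_i - 1) * h * w + (s - 1) * w + (s - 1) + (c'' : ℕ) * c_i * h * w
          - (c : ℕ) * h * w - (a : ℕ) * w - (a' : ℕ))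
        + ((b' : ℕ) * c_o * c_i * h * w + (c₂ : ℕ) * h * w + (i' : ℕ) * w + (j' : ℕ))
      = (b : ℕ) * c_o * c_i * h * w + ((c_i - 1) * h * w + (s - 1) * w + (s - 1))
          + (c' : ℕ) * c_i * h * w + i * w + j)
      ↔ ((c'' : ℕ) = c' ∧ (b' : ℕ) = b ∧ (c₂ : ℕ) = c
          ∧ (i' : ℕ) = i + a ∧ (j' : ℕ) = j + a') := by
    intro c'' c a a' b' c₂ i' j'
    exact conv_key c_o c_i h w s hh hw hs hsh hsw b b' c'' c' c c₂ a a' i j i' j'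
      c''.isLt c'.isLt c.isLt c₂.isLt a.isLt a'.isLt i'.isLt j'.isLt hi hj
  simp only [Finset.sum_mul]
  simp only [Finset.mul_sum]
  simp only [Polynomial.finset_sum_coeff, Polynomial.monomial_mul_monomial,
    Polynomial.coeff_monomial]
  rw [Fintype.sum_eq_single c' (fun x hx =>
    Finset.sum_eq_zero fun c _ => Finset.sum_eq_zero fun a _ =>
    Finset.sum_eq_zero fun a' _ => Finset.sum_eq_zero fun b' _ =>
    Finset.sum_eq_zero fun c₂ _ => Finset.sum_eq_zero fun i' _ =>
    Finset.sum_eq_zero fun j' _ => by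
      rw [if_neg]
      intro hcond
      exact hx (Fin.ext ((keyF x c a a' b' c₂ i' j').mp hcond).1))]
  refine Finset.sum_congr rfl fun c _ => Finset.sum_congr rfl fun a _ =>
    Finset.sum_congr rfl fun a' _ => ?_
  have hia : i + (a : ℕ) < h := by have := a.isLt; omega
  have hja : j + (a' : ℕ) < w := by have := a'.isLt; omega
  rw [Fintype.sum_eq_single b (fun x hx =>
    Finset.sum_eq_zero fun c₂ _ => Finset.sum_eq_zero fun i' _ =>
    Finset.sum_eq_zero fun j' _ => by
      rw [if_neg]
      intro hcond
      exact hx (Fin.ext ((keyF c' c a a' x c₂ i' j').mp hcond).2.1))]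
  rw [Fintype.sum_eq_single c (fun x hx =>
    Finset.sum_eq_zero fun i' _ => Finset.sum_eq_zero fun j' _ => by
      rw [if_neg]
      intro hcond
      exact hx (Fin.ext ((keyF c' c a a' b x i' j').mp hcond).2.2.1))]
  rw [Fintype.sum_eq_single (⟨i + (a : ℕ), hia⟩ : Fin h) (fun x hx =>
    Finset.sum_eq_zero fun j' _ => by
      rw [if_neg]
      intro hcond
      exact hx (Fin.ext ((keyF c' c a a' b c x j').mp hcond).2.2.2.1))]
  rw [Fintype.sum_eq_single (⟨j + (a' : ℕ), hja⟩ : Fin w) (fun x hx => by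
      rw [if_neg]
      intro hcond
      exact hx (Fin.ext ((keyF c' c a a' b c ⟨i + (a : ℕ), hia⟩ x).mp hcond).2.2.2.2))]
  rw [if_pos ((keyF c' c a a' b c ⟨i + (a : ℕ), hia⟩ ⟨j + (a' : ℕ), hja⟩).mpr
    ⟨rfl, rfl, rfl, rfl, rfl⟩)]
end
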